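/- Let K ≥ N ≥ 1 be integers, let z̃, ṽ, ũ ∈ ℂ^N with ũ ≠ 0 and P⊥_ũ ṽ ≠ 0, and let b ≥ 0. Define l₁(b, y) = (1+b)^{−1} (1 + b + y)^{−(K+1)} and l₂(b, y) = [((1+b) + y)/(1 + y)]^{K+1} for y ≥ 0. Set α₁ = (ṽ† ṽ)⁻¹ ṽ† z̃, α₂ = (ṽ† P⊥_ũ ṽ)⁻¹ ṽ† P⊥_ũ z̃, and R² = |α₁ − α₂|². Then sup over α ∈ ℂ of l₁(b, ‖z̃ − α ṽ‖²) · l₂(b, ‖P⊥_ũ (z̃ − α ṽ)‖²) equals the maximum over t ∈ [0,1] of l₁(b, Re(z̃† P⊥_ṽ z̃) + (1−t)² R² ‖ṽ‖²) · l₂(b, Re(z̃† P⊥_ũ P⊥_{P⊥_ũ ṽ} P⊥_ũ z̃) + t² R² · Re(ṽ† P⊥_ũ ṽ)). -/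

import Mathlib

open Matrix
open scoped ComplexOrder

/-- Squared Euclidean norm of a complex vector. -/
noncomputable def nsq {N : ℕ} (w : Fin N → ℂ) : ℝ := (star w ⬝ᵥ w).re

/-- Orthogonal projection matrix `P⊥_q = I − q q†/‖q‖²` onto the orthogonal complement
of the span of `q`. -/
noncomputable def projPerp {N : ℕ} (q : Fin N → ℂ) : Matrix (Fin N) (Fin N) ℂ :=
  1 - (star q ⬝ᵥ q)⁻¹ • vecMulVec q (star q)

lemma dot_self_eq {N : ℕ} (w : Fin N → ℂ) : star w ⬝ᵥ w = ((nsq w : ℝ) : ℂ) := by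
  have h : star w ⬝ᵥ w = ((∑ i, Complex.normSq (w i) : ℝ) : ℂ) := by
    simp [dotProduct, Complex.normSq_eq_conj_mul_self]
  rw [h, nsq, h]
  simp

lemma nsq_eq_sum {N : ℕ} (w : Fin N → ℂ) : nsq w = ∑ i, Complex.normSq (w i) := by
  have h : star w ⬝ᵥ w = ((∑ i, Complex.normSq (w i) : ℝ) : ℂ) := by
    simp [dotProduct, Complex.normSq_eq_conj_mul_self]
  rw [nsq, h, Complex.ofReal_re]

lemma nsq_nonneg {N : ℕ} (w : Fin N → ℂ) : 0 ≤ nsq w := by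
  rw [nsq_eq_sum]
  exact Finset.sum_nonneg fun i _ => Complex.normSq_nonneg _

lemma nsq_pos {N : ℕ} {w : Fin N → ℂ} (hw : w ≠ 0) : 0 < nsq w := by
  rcases (nsq_nonneg w).lt_or_eq with h | h
  · exact h
  exfalso; apply hw
  have h3 : (∑ i, Complex.normSq (w i) : ℝ) = 0 := by rw [← nsq_eq_sum, ← h]
  have := (Finset.sum_eq_zero_iff_of_nonneg (fun i _ => Complex.normSq_nonneg (w i))).1 h3
  funext i
  simpa [Complex.normSq_eq_zero] using this i (Finset.mem_univ i)

lemma star_dot {N : ℕ} (z v : Fin N → ℂ) :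
    star z ⬝ᵥ v = (starRingEnd ℂ) (star v ⬝ᵥ z) := by
  simp [dotProduct, Finset.sum_comm, map_sum, mul_comm]

lemma projPerp_mulVec {N : ℕ} (q x : Fin N → ℂ) :
    projPerp q *ᵥ x = x - ((star q ⬝ᵥ q)⁻¹ * (star q ⬝ᵥ x)) • q := by
  rw [projPerp, sub_mulVec, Matrix.one_mulVec, smul_mulVec]
  congr 1
  funext i
  simp only [Pi.smul_apply, smul_eq_mul, mulVec, dotProduct, vecMulVec, Matrix.of_apply,
    Pi.star_apply]
  rw [mul_assoc]
  congr 1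
  rw [Finset.sum_mul]
  congr 1; funext j; ring

lemma key_decomp {N : ℕ} (z v : Fin N → ℂ) (hv : v ≠ 0) (α : ℂ) :
    nsq (z - α • v) = (star z ⬝ᵥ (projPerp v *ᵥ z)).re
      + ‖α - (star v ⬝ᵥ v)⁻¹ * (star v ⬝ᵥ z)‖ ^ 2 * nsq v := by
  have hD : (0:ℝ) < nsq v := nsq_pos hv
  have hDc : ((nsq v : ℝ) : ℂ) ≠ 0 := by exact_mod_cast hD.ne'
  set c : ℂ := star v ⬝ᵥ z with hc
  have main : star (z - α • v) ⬝ᵥ (z - α • v)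
      = star z ⬝ᵥ (projPerp v *ᵥ z)
        + ((Complex.normSq (α - (star v ⬝ᵥ v)⁻¹ * c) : ℝ) : ℂ) * ((nsq v : ℝ) : ℂ) := by
    rw [projPerp_mulVec]
    simp only [dotProduct_sub, sub_dotProduct, dotProduct_smul, smul_dotProduct, star_sub,
      star_smul, smul_eq_mul, dot_self_eq v, ← hc, star_dot z v,
      Complex.normSq_eq_conj_mul_self]
    simp only [map_sub, _root_.map_mul, map_inv₀, Complex.conj_ofReal, map_sub, RCLike.star_def]
    field_simp
    ring
  have := congrArg Complex.re main
  rw [nsq, this]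
  rw [Complex.add_re, ← Complex.ofReal_mul, Complex.ofReal_re, Complex.sq_norm, dot_self_eq v]

lemma projPerp_sa {N : ℕ} (q x y : Fin N → ℂ) :
    star y ⬝ᵥ (projPerp q *ᵥ x) = star (projPerp q *ᵥ y) ⬝ᵥ x := by
  rw [projPerp_mulVec, projPerp_mulVec]
  simp only [dotProduct_sub, sub_dotProduct, dotProduct_smul, smul_dotProduct, star_sub,
    star_smul, smul_eq_mul, dot_self_eq q, star_dot y q, star_dot x q, RCLike.star_def,
    _root_.map_mul, map_inv₀, Complex.conj_ofReal, map_sub]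
  rw [star_dot q x]
  ring_nf

lemma projPerp_idem {N : ℕ} {q : Fin N → ℂ} (hq : q ≠ 0) (x : Fin N → ℂ) :
    projPerp q *ᵥ (projPerp q *ᵥ x) = projPerp q *ᵥ x := by
  have hD : ((nsq q : ℝ) : ℂ) ≠ 0 := by exact_mod_cast (nsq_pos hq).ne'
  conv_lhs => rw [projPerp_mulVec]
  have h0 : star q ⬝ᵥ (projPerp q *ᵥ x) = 0 := by
    rw [projPerp_mulVec]
    simp only [dotProduct_sub, dotProduct_smul, smul_eq_mul, dot_self_eq q]
    field_simp
    simp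
  rw [h0]
  simp

lemma mulVec_sub_smul {N : ℕ} (P : Matrix (Fin N) (Fin N) ℂ) (z v : Fin N → ℂ) (α : ℂ) :
    P *ᵥ (z - α • v) = P *ᵥ z - α • (P *ᵥ v) := by
  rw [Matrix.mulVec_sub]
  congr 1
  rw [Matrix.mulVec_smul]

lemma l1_anti (K : ℕ) (b : ℝ) (hb : 0 ≤ b) {x y : ℝ} (hx : 0 ≤ x) (hxy : x ≤ y) :
    (1 + b)⁻¹ * (1 + b + y) ^ (-((K : ℝ) + 1)) ≤ (1 + b)⁻¹ * (1 + b + x) ^ (-((K : ℝ) + 1)) := by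
  apply mul_le_mul_of_nonneg_left _ (by positivity)
  apply Real.rpow_le_rpow_of_nonpos (by linarith) (by linarith) (neg_nonpos.2 (by positivity))

lemma l1_nonneg (K : ℕ) (b : ℝ) (hb : 0 ≤ b) {y : ℝ} (hy : 0 ≤ y) :
    0 ≤ (1 + b)⁻¹ * (1 + b + y) ^ (-((K : ℝ) + 1)) :=
  mul_nonneg (by positivity) (Real.rpow_nonneg (by linarith) _)

lemma l2_anti (K : ℕ) (b : ℝ) (hb : 0 ≤ b) {x y : ℝ} (hx : 0 ≤ x) (hxy : x ≤ y) :
    (((1 + b) + y) / (1 + y)) ^ (K + 1) ≤ (((1 + b) + x) / (1 + x)) ^ (K + 1) := by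
  apply pow_le_pow_left₀ (div_nonneg (by linarith) (by linarith))
  rw [div_le_div_iff₀ (by linarith) (by linarith)]
  nlinarith

lemma l2_nonneg (K : ℕ) (b : ℝ) (hb : 0 ≤ b) {y : ℝ} (hy : 0 ≤ y) :
    0 ≤ (((1 + b) + y) / (1 + y)) ^ (K + 1) := by positivity

lemma exists_t (R2 s₁ s₂ p : ℝ) (hR2 : 0 ≤ R2) (hs₁ : 0 ≤ s₁) (hs₂ : 0 ≤ s₂)
    (hCS : p ^ 2 ≤ s₂ * R2) (hsum : s₁ = s₂ - 2 * p + R2) :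
    ∃ t ∈ Set.Icc (0:ℝ) 1, (1 - t) ^ 2 * R2 ≤ s₁ ∧ t ^ 2 * R2 ≤ s₂ := by
  rcases eq_or_lt_of_le hR2 with h | h
  · exact ⟨0, ⟨le_refl _, zero_le_one⟩, by rw [← h]; simp [hs₁], by rw [← h]; simp [hs₂]⟩
  set tr := p / R2 with htr
  rcases le_or_gt tr 0 with h0 | h0
  · refine ⟨0, ⟨le_refl _, zero_le_one⟩, ?_, by simpa using hs₂⟩
    have hp : p ≤ 0 := by
      by_contra hc; push_neg at hc
      exact absurd (div_pos hc h) (not_lt.2 h0)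
    nlinarith
  rcases le_or_gt 1 tr with h1 | h1
  · refine ⟨1, ⟨zero_le_one, le_refl _⟩, by simpa [hsum] using hs₁, ?_⟩
    have hp : R2 ≤ p := by
      have := (le_div_iff₀ h).1 h1; linarith
    nlinarith
  · refine ⟨tr, ⟨h0.le, h1.le⟩, ?_, ?_⟩
    · have : (1 - tr) ^ 2 * R2 = R2 - 2 * p + p ^ 2 / R2 := by
        rw [htr]; field_simp; ring
      rw [this, hsum]
      have : p ^ 2 / R2 ≤ s₂ := by
        rw [div_le_iff₀ h]; linarith
      linarith
    · have : tr ^ 2 * R2 = p ^ 2 / R2 := by rw [htr]; field_simp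
      rw [this, div_le_iff₀ h]; linarith

lemma G_cont (K : ℕ) (b C₁ C₂ R2 nv dv : ℝ) (hb : 0 ≤ b) (hC₁ : 0 ≤ C₁) (hC₂ : 0 ≤ C₂)
    (hR2 : 0 ≤ R2) (hnv : 0 ≤ nv) (hdv : 0 ≤ dv) :
    Continuous (fun t : ℝ =>
      ((1 + b)⁻¹ * (1 + b + (C₁ + (1 - t) ^ 2 * R2 * nv)) ^ (-((K:ℝ)+1))) *
      (((1 + b) + (C₂ + t ^ 2 * R2 * dv)) / (1 + (C₂ + t ^ 2 * R2 * dv))) ^ (K + 1)) := by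
  have hl1eq : ∀ y : ℝ, 0 ≤ y →
      (1 + b + y) ^ (-((K:ℝ)+1)) = ((1 + b + y) ^ (K+1 : ℕ))⁻¹ := by
    intro y hy
    rw [show (-((K:ℝ)+1)) = -((K+1 : ℕ):ℝ) by push_cast; ring,
      Real.rpow_neg (by linarith), Real.rpow_natCast]
  have heq : (fun t : ℝ =>
      ((1 + b)⁻¹ * (1 + b + (C₁ + (1 - t) ^ 2 * R2 * nv)) ^ (-((K:ℝ)+1))) *
      (((1 + b) + (C₂ + t ^ 2 * R2 * dv)) / (1 + (C₂ + t ^ 2 * R2 * dv))) ^ (K + 1))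
      = (fun t : ℝ =>
      ((1 + b)⁻¹ * ((1 + b + (C₁ + (1 - t) ^ 2 * R2 * nv)) ^ (K+1 : ℕ))⁻¹) *
      (((1 + b) + (C₂ + t ^ 2 * R2 * dv)) / (1 + (C₂ + t ^ 2 * R2 * dv))) ^ (K + 1)) := by
    funext t
    rw [hl1eq _ (by positivity)]
  rw [heq]
  apply Continuous.mul
  · apply Continuous.mul continuous_const
    apply Continuous.inv₀ (by fun_prop)
    intro t
    have h : 0 ≤ C₁ + (1 - t) ^ 2 * R2 * nv := by positivity
    positivity
  · apply Continuous.pow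
    apply Continuous.div (by fun_prop) (by fun_prop)
    intro t
    have h : 0 ≤ C₂ + t ^ 2 * R2 * dv := by positivity
    positivity

/-- equation (8) of the paper. The supremum over `α ∈ ℂ` of
`l₁(b,‖z̃−αṽ‖²)·l₂(b,‖P⊥_ũ(z̃−αṽ)‖²)` equals the maximum over `t ∈ [0,1]` of the
corresponding expression along the segment joining `α₁` and `α₂`. -/
theorem stmt_7 (N K : ℕ) (hN : 1 ≤ N) (hKN : N ≤ K)
    (z v u : Fin N → ℂ) (hu : u ≠ 0) (hpv : projPerp u *ᵥ v ≠ 0)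
    (b : ℝ) (hb : 0 ≤ b) :
    let l₁ : ℝ → ℝ := fun y => (1 + b)⁻¹ * (1 + b + y) ^ (-((K : ℝ) + 1))
    let l₂ : ℝ → ℝ := fun y => (((1 + b) + y) / (1 + y)) ^ (K + 1)
    let α₁ : ℂ := (star v ⬝ᵥ v)⁻¹ * (star v ⬝ᵥ z)
    let α₂ : ℂ := (star v ⬝ᵥ (projPerp u *ᵥ v))⁻¹ * (star v ⬝ᵥ (projPerp u *ᵥ z))
    let R2 : ℝ := ‖α₁ - α₂‖ ^ 2
    let G : ℝ → ℝ := fun t =>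
      l₁ ((star z ⬝ᵥ (projPerp v *ᵥ z)).re + (1 - t) ^ 2 * R2 * nsq v) *
      l₂ ((star z ⬝ᵥ (projPerp u *ᵥ (projPerp (projPerp u *ᵥ v) *ᵥ (projPerp u *ᵥ z)))).re +
            t ^ 2 * R2 * (star v ⬝ᵥ (projPerp u *ᵥ v)).re)
    ∃ t₀ ∈ Set.Icc (0 : ℝ) 1,
      (∀ t ∈ Set.Icc (0 : ℝ) 1, G t ≤ G t₀) ∧
      sSup {x : ℝ | ∃ α : ℂ,
          x = l₁ (nsq (z - α • v)) * l₂ (nsq (projPerp u *ᵥ (z - α • v)))} = G t₀ := by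
  intro l₁ l₂ α₁ α₂ R2 G
  have hv : v ≠ 0 := by
    intro h; exact hpv (by rw [h, Matrix.mulVec_zero])
  set v' : Fin N → ℂ := projPerp u *ᵥ v with hv'def
  set z' : Fin N → ℂ := projPerp u *ᵥ z with hz'def
  -- scalar identities
  have hvv' : star v ⬝ᵥ v' = star v' ⬝ᵥ v' := by
    calc star v ⬝ᵥ v' = star v ⬝ᵥ (projPerp u *ᵥ v') := by rw [hv'def, projPerp_idem hu]
      _ = star v' ⬝ᵥ v' := by rw [projPerp_sa, ← hv'def]
  have hvz' : star v ⬝ᵥ z' = star v' ⬝ᵥ z' := by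
    calc star v ⬝ᵥ z' = star v ⬝ᵥ (projPerp u *ᵥ z') := by rw [hz'def, projPerp_idem hu]
      _ = star v' ⬝ᵥ z' := by rw [projPerp_sa, ← hv'def]
  -- constants
  set C₁ : ℝ := (star z ⬝ᵥ (projPerp v *ᵥ z)).re with hC₁def
  set C₂ : ℝ := (star z ⬝ᵥ (projPerp u *ᵥ (projPerp v' *ᵥ z'))).re with hC₂def
  set nv : ℝ := nsq v with hnvdef
  set dv : ℝ := (star v ⬝ᵥ v').re with hdvdef
  have hC₂' : C₂ = (star z' ⬝ᵥ (projPerp v' *ᵥ z')).re := by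
    rw [hC₂def, projPerp_sa, ← hz'def]
  have hdv' : dv = nsq v' := by rw [hdvdef, hvv']; rfl
  have hGd : ∀ t, G t = l₁ (C₁ + (1 - t) ^ 2 * R2 * nv) * l₂ (C₂ + t ^ 2 * R2 * dv) :=
    fun _ => rfl
  -- the two key decompositions
  have ident1 : ∀ α : ℂ, nsq (z - α • v) = C₁ + ‖α - α₁‖ ^ 2 * nv :=
    fun α => key_decomp z v hv α
  have hα₂eq : α₂ = (star v' ⬝ᵥ v')⁻¹ * (star v' ⬝ᵥ z') := by
    rw [← hvv', ← hvz', hv'def, hz'def]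
  have ident2 : ∀ α : ℂ,
      nsq (projPerp u *ᵥ (z - α • v)) = C₂ + ‖α - α₂‖ ^ 2 * dv := by
    intro α
    rw [mulVec_sub_smul, ← hz'def, ← hv'def, key_decomp z' v' hpv α, ← hC₂', hdv', ← hα₂eq]
  -- nonnegativity of constants
  have hnv : (0:ℝ) < nv := nsq_pos hv
  have hdv : (0:ℝ) < dv := by rw [hdv']; exact nsq_pos hpv
  have hC₁ : (0:ℝ) ≤ C₁ := by
    have h := ident1 α₁
    simp only [sub_self, norm_zero] at h
    have := nsq_nonneg (z - α₁ • v)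
    nlinarith [this, h]
  have hC₂ : (0:ℝ) ≤ C₂ := by
    have h := ident2 α₂
    simp only [sub_self, norm_zero] at h
    have := nsq_nonneg (projPerp u *ᵥ (z - α₂ • v))
    nlinarith [this, h]
  have hR2 : (0:ℝ) ≤ R2 := sq_nonneg _
  -- continuity of G
  have hGc : Continuous G := by
    have h2 : G = (fun t : ℝ =>
      ((1 + b)⁻¹ * (1 + b + (C₁ + (1 - t) ^ 2 * R2 * nv)) ^ (-((K:ℝ)+1))) *
      (((1 + b) + (C₂ + t ^ 2 * R2 * dv)) / (1 + (C₂ + t ^ 2 * R2 * dv))) ^ (K + 1)) := by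
      funext t
      rw [hGd t]
    rw [h2]
    exact G_cont K b C₁ C₂ R2 nv dv hb hC₁ hC₂ hR2 hnv.le hdv.le
  obtain ⟨t₀, ht₀, hmax⟩ := isCompact_Icc.exists_isMaxOn (Set.nonempty_Icc.2 zero_le_one)
    hGc.continuousOn
  refine ⟨t₀, ht₀, fun t ht => hmax ht, ?_⟩
  -- upper bound for all α
  have hub : ∀ α : ℂ, l₁ (nsq (z - α • v)) * l₂ (nsq (projPerp u *ᵥ (z - α • v))) ≤ G t₀ := by
    intro α
    rw [ident1 α, ident2 α]
    set s₁ : ℝ := ‖α - α₁‖ ^ 2 with hs₁def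
    set s₂ : ℝ := ‖α - α₂‖ ^ 2 with hs₂def
    set p : ℝ := ((α - α₂) * (starRingEnd ℂ) (α₁ - α₂)).re with hpdef
    have hs₁ : 0 ≤ s₁ := by rw [hs₁def]; positivity
    have hs₂ : 0 ≤ s₂ := by rw [hs₂def]; positivity
    have hCS : p ^ 2 ≤ s₂ * R2 := by
      have h1 := Complex.abs_re_le_norm ((α - α₂) * (starRingEnd ℂ) (α₁ - α₂))
      rw [norm_mul, Complex.norm_conj] at h1
      have h2 := pow_le_pow_left₀ (abs_nonneg p) h1 2
      rw [sq_abs] at h2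
      calc p ^ 2 ≤ (‖α - α₂‖ * ‖α₁ - α₂‖) ^ 2 := h2
        _ = s₂ * R2 := by rw [mul_pow]
    have hsum : s₁ = s₂ - 2 * p + R2 := by
      have he : α - α₁ = (α - α₂) - (α₁ - α₂) := by ring
      rw [hs₁def, he, Complex.sq_norm, Complex.normSq_sub, hpdef]
      show _ = ‖_‖ ^ 2 - _ + ‖_‖ ^ 2
      rw [Complex.sq_norm, Complex.sq_norm]
      ring
    obtain ⟨t, htI, h1, h2⟩ := exists_t R2 s₁ s₂ p hR2 hs₁ hs₂ hCS hsum
    have hx1 : (0:ℝ) ≤ C₁ + (1 - t) ^ 2 * R2 * nv :=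
      add_nonneg hC₁ (mul_nonneg (mul_nonneg (sq_nonneg _) hR2) hnv.le)
    have hx2 : (0:ℝ) ≤ C₂ + t ^ 2 * R2 * dv :=
      add_nonneg hC₂ (mul_nonneg (mul_nonneg (sq_nonneg _) hR2) hdv.le)
    have hx2' : (0:ℝ) ≤ C₂ + s₂ * dv := add_nonneg hC₂ (mul_nonneg hs₂ hdv.le)
    have hy1 : C₁ + (1 - t) ^ 2 * R2 * nv ≤ C₁ + s₁ * nv := by
      have := mul_le_mul_of_nonneg_right h1 hnv.le; linarith
    have hy2 : C₂ + t ^ 2 * R2 * dv ≤ C₂ + s₂ * dv := by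
      have := mul_le_mul_of_nonneg_right h2 hdv.le; linarith
    have step1 : l₁ (C₁ + s₁ * nv) * l₂ (C₂ + s₂ * dv) ≤ G t := by
      rw [hGd t]
      exact mul_le_mul (l1_anti K b hb hx1 hy1) (l2_anti K b hb hx2 hy2)
        (l2_nonneg K b hb hx2') (l1_nonneg K b hb hx1)
    exact step1.trans (hmax htI)
  -- G t₀ is attained
  set αs : ℂ := α₂ + (t₀ : ℂ) * (α₁ - α₂) with hαsdef
  have hmem : G t₀ = l₁ (nsq (z - αs • v)) * l₂ (nsq (projPerp u *ᵥ (z - αs • v))) := by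
    have e1 : ‖αs - α₁‖ ^ 2 = (1 - t₀) ^ 2 * R2 := by
      have : αs - α₁ = ((t₀ - 1 : ℝ) : ℂ) * (α₁ - α₂) := by
        rw [hαsdef]; push_cast; ring
      rw [this, norm_mul, Complex.norm_real, Real.norm_eq_abs, mul_pow, sq_abs]
      ring
    have e2 : ‖αs - α₂‖ ^ 2 = t₀ ^ 2 * R2 := by
      have : αs - α₂ = ((t₀ : ℝ) : ℂ) * (α₁ - α₂) := by rw [hαsdef]; push_cast; ring
      rw [this, norm_mul, Complex.norm_real, Real.norm_eq_abs, mul_pow, sq_abs]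
    rw [ident1 αs, ident2 αs, e1, e2, hGd t₀]
  apply le_antisymm
  · have hne : {x : ℝ | ∃ α : ℂ,
        x = l₁ (nsq (z - α • v)) * l₂ (nsq (projPerp u *ᵥ (z - α • v)))}.Nonempty :=
      ⟨_, ⟨0, rfl⟩⟩
    apply csSup_le hne
    rintro x ⟨α, rfl⟩
    exact hub α
  · have hbdd : BddAbove {x : ℝ | ∃ α : ℂ,
        x = l₁ (nsq (z - α • v)) * l₂ (nsq (projPerp u *ᵥ (z - α • v)))} := by
      refine ⟨G t₀, ?_⟩
      rintro x ⟨α, rfl⟩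
      exact hub α
    exact le_csSup hbdd ⟨αs, hmem⟩
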